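/- There is a bijection between (isomorphism classes of) split graphs on n vertices and (isomorphism classes of) posets of height at most one on n elements, obtained by taking an S-max KS-partition of the split graph and declaring x ≺ y iff x ∈ S, y ∈ K, and xy is an edge; the inverse makes the height-1 elements into a clique. -/

import Mathlib

open SimpleGraph
attribute [local instance] Classical.propDecidable

variable {V : Type*} [Fintype V] [DecidableEq V]

/-- A set of vertices is stable (independent) if no two of its elements are adjacent. -/
def IsStableSet (G : SimpleGraph V) (s : Set V) : Prop :=
  s.Pairwise fun a b => ¬ G.Adj a b

/-- The clique number ω(G). -/
noncomputable def omegaNum (G : SimpleGraph V) : ℕ :=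
  Finset.univ.sup fun s : Finset V => if G.IsClique (s : Set V) then s.card else 0

/-- The independence number α(G). -/
noncomputable def alphaNum (G : SimpleGraph V) : ℕ :=
  Finset.univ.sup fun s : Finset V => if IsStableSet G (s : Set V) then s.card else 0

/-- A KS-partition of `G`: a partition of the vertex set into a clique `K` and a stable set `S`. -/
def IsKSPartition (G : SimpleGraph V) (K S : Finset V) : Prop :=
  Disjoint K S ∧ K ∪ S = Finset.univ ∧ G.IsClique (K : Set V) ∧ IsStableSet G (S : Set V)

/-- `G` is a split graph. -/
def IsSplit (G : SimpleGraph V) : Prop := ∃ K S : Finset V, IsKSPartition G K S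

/-- A split graph is balanced if it has a KS-partition with `|K| = ω(G)` and `|S| = α(G)`. -/
def IsBalanced (G : SimpleGraph V) : Prop :=
  ∃ K S : Finset V, IsKSPartition G K S ∧ K.card = omegaNum G ∧ S.card = alphaNum G

/-- A bipartite poset on `Fin n`: a strict partial order of height at most one
(no chain x ≺ y ≺ z). -/
structure BipPoset (n : ℕ) where
  lt : Fin n → Fin n → Prop
  irrefl : ∀ a, ¬ lt a a
  trans : ∀ a b c, lt a b → lt b c → lt a c
  height_le_one : ∀ a b c, ¬ (lt a b ∧ lt b c)

/-- An element has height 1 if some element lies strictly below it. -/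
def HeightOne {n : ℕ} (P : BipPoset n) (y : Fin n) : Prop := ∃ u, P.lt u y

/-- A full support point: a height-0 element comparable to every height-1 element. -/
def FullSupport {n : ℕ} (P : BipPoset n) (x : Fin n) : Prop :=
  (∀ u, ¬ P.lt u x) ∧ ∀ y, HeightOne P y → P.lt x y

/-- Isomorphism of bipartite posets on `Fin n`. -/
def BipPosetRel (n : ℕ) (P Q : BipPoset n) : Prop :=
  ∃ e : Equiv.Perm (Fin n), ∀ a b, P.lt a b ↔ Q.lt (e a) (e b)

/-- Isomorphism of split graphs on `Fin n`. -/
def SplitIsoRel (n : ℕ) (G H : {G : SimpleGraph (Fin n) // IsSplit G}) : Prop :=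
  Nonempty (G.1 ≃g H.1)

/-!
In an S-max KS-partition `(K, S)` every vertex of `K` has a neighbour in `S`: otherwise it could be
moved into `S`. Hence the height-1 elements of the associated poset are exactly the vertices of `K`,
and the graph is recovered from the poset by making them a clique. Conversely, the height-1 elements
of a poset of height at most one and the remaining elements form an S-max KS-partition of the graph
built from it. Finally, two S-max KS-partitions of the same graph differ by exchanging one vertex
`y ∈ K` with one vertex `x ∈ K'`; these are twins, so the transposition of `x` and `y` is a graph
automorphism carrying `K` to `K'`, and the two posets are isomorphic.
-/

omit [Fintype V] [DecidableEq V] in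
theorem IsStableSet.insert {G : SimpleGraph V} {s : Set V} (hs : IsStableSet G s) {k : V}
    (hk : ∀ v ∈ s, ¬ G.Adj v k) : IsStableSet G (insert k s) :=
  Set.pairwise_insert.2 ⟨hs, fun v hv _ => ⟨fun hkv => hk v hv hkv.symm, hk v hv⟩⟩

omit [DecidableEq V] in
theorem alphaNum_le_iff {G : SimpleGraph V} {m : ℕ} :
    alphaNum G ≤ m ↔ ∀ s : Finset V, IsStableSet G s → s.card ≤ m := by
  simp only [alphaNum, Finset.sup_le_iff, Finset.mem_univ, true_implies]
  refine forall_congr' fun s => ?_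
  split_ifs with hs <;> simp [hs]

omit [DecidableEq V] in
theorem card_le_alphaNum {G : SimpleGraph V} {s : Finset V} (hs : IsStableSet G s) :
    s.card ≤ alphaNum G :=
  alphaNum_le_iff.1 le_rfl s hs

def IsSMaxKSPartition (G : SimpleGraph V) (K S : Finset V) : Prop :=
  IsKSPartition G K S ∧ S.card = alphaNum G

namespace IsKSPartition

variable {G : SimpleGraph V} {K S K' S' : Finset V}

theorem eq_compl (h : IsKSPartition G K S) : S = Kᶜ :=
  eq_compl_iff_isCompl.2 ⟨h.1.symm, codisjoint_iff.2 ((sup_comm S K).trans h.2.1)⟩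

theorem mem_iff_notMem (h : IsKSPartition G K S) {v : V} : v ∈ S ↔ v ∉ K := by
  rw [h.eq_compl, Finset.mem_compl]

theorem card_add_card (h : IsKSPartition G K S) : K.card + S.card = Fintype.card V := by
  rw [← Finset.card_union_of_disjoint h.1, h.2.1, Finset.card_univ]

theorem subset_or_exists_subset_insert (h : IsKSPartition G K S) {T : Finset V}
    (hT : IsStableSet G T) :
    T ⊆ S ∨ ∃ k ∈ K, T ⊆ insert k (S.filter fun s => ¬ G.Adj s k) := by
  by_cases hTK : ∃ k ∈ T, k ∈ K
  · obtain ⟨k, hkT, hkK⟩ := hTK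
    refine Or.inr ⟨k, hkK, fun t htT => ?_⟩
    rcases eq_or_ne t k with rfl | htk
    · exact Finset.mem_insert_self _ _
    have htK : t ∉ K := fun htK => hT htT hkT htk (h.2.2.1 htK hkK htk)
    exact Finset.mem_insert_of_mem
      (Finset.mem_filter.2 ⟨h.mem_iff_notMem.2 htK, hT htT hkT htk⟩)
  · push Not at hTK
    exact Or.inl fun t htT => h.mem_iff_notMem.2 (hTK t htT)

theorem alphaNum_le_card_add_one (h : IsKSPartition G K S) : alphaNum G ≤ S.card + 1 := by
  refine alphaNum_le_iff.2 fun T hT => ?_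
  rcases h.subset_or_exists_subset_insert hT with hTS | ⟨k, -, hTk⟩
  · exact (Finset.card_le_card hTS).trans (Nat.le_succ _)
  · exact (Finset.card_le_card hTk).trans
      ((Finset.card_insert_le _ _).trans (by grw [Finset.card_filter_le]))

theorem card_eq_alphaNum_iff (h : IsKSPartition G K S) :
    S.card = alphaNum G ↔ ∀ k ∈ K, ∃ s ∈ S, G.Adj s k := by
  constructor
  · intro hS k hkK
    by_contra! hk
    have hkS : k ∉ S := fun hkS => h.mem_iff_notMem.1 hkS hkK
    have := card_le_alphaNum (s := insert k S) (by simpa using h.2.2.2.insert hk)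
    rw [Finset.card_insert_of_notMem hkS] at this
    omega
  · intro hcover
    refine le_antisymm (card_le_alphaNum h.2.2.2) (alphaNum_le_iff.2 fun T hT => ?_)
    rcases h.subset_or_exists_subset_insert hT with hTS | ⟨k, hkK, hTk⟩
    · exact Finset.card_le_card hTS
    obtain ⟨s, hsS, hsk⟩ := hcover k hkK
    have hlt : (S.filter fun s => ¬ G.Adj s k).card < S.card :=
      Finset.card_lt_card (Finset.filter_ssubset.2 ⟨s, hsS, not_not.2 hsk⟩)
    exact (Finset.card_le_card hTk).trans ((Finset.card_insert_le _ _).trans hlt)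

theorem erase_insert (h : IsKSPartition G K S) {k : V} (hk : ∀ s ∈ S, ¬ G.Adj s k) :
    IsKSPartition G (K.erase k) (insert k S) := by
  have hS : insert k S = (K.erase k)ᶜ := by rw [Finset.compl_erase, h.eq_compl]
  exact ⟨hS ▸ disjoint_compl_right, hS ▸ Finset.union_compl _,
    h.2.2.1.subset (by simp), by simpa using h.2.2.2.insert hk⟩

theorem eq_of_mem_sdiff (h : IsKSPartition G K S) (h' : IsKSPartition G K' S') {a b : V}
    (ha : a ∈ K \ K') (hb : b ∈ K \ K') : a = b := by
  rw [Finset.mem_sdiff, ← h'.mem_iff_notMem] at ha hb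
  by_contra hab
  exact h'.2.2.2 ha.2 hb.2 hab (h.2.2.1 ha.1 hb.1 hab)

section Exchange

variable (h : IsKSPartition G K S) (h' : IsKSPartition G K' S') {x y v : V}
  (hx : x ∈ K' \ K) (hy : y ∈ K \ K') (hvx : v ≠ x) (hvy : v ≠ y)
include h h' hx hy hvx hvy

theorem mem_iff_mem_of_mem_sdiff : v ∈ K ↔ v ∈ K' :=
  ⟨fun hv => by_contra fun hv' => hvy (h.eq_of_mem_sdiff h' (Finset.mem_sdiff.2 ⟨hv, hv'⟩) hy),
    fun hv => by_contra fun hv' => hvx (h'.eq_of_mem_sdiff h (Finset.mem_sdiff.2 ⟨hv, hv'⟩) hx)⟩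

theorem adj_iff_adj_of_mem_sdiff : G.Adj v x ↔ G.Adj v y := by
  have hmem := mem_iff_mem_of_mem_sdiff h h' hx hy hvx hvy
  rw [Finset.mem_sdiff] at hx hy
  by_cases hvK : v ∈ K
  · exact iff_of_true (h'.2.2.1 (hmem.1 hvK) hx.1 hvx) (h.2.2.1 hvK hy.1 hvy)
  · exact iff_of_false (h.2.2.2 (h.mem_iff_notMem.2 hvK) (h.mem_iff_notMem.2 hx.2) hvx)
      (h'.2.2.2 (h'.mem_iff_notMem.2 (mt hmem.2 hvK)) (h'.mem_iff_notMem.2 hy.2) hvy)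

end Exchange

end IsKSPartition

theorem IsSplit.exists_isSMaxKSPartition {G : SimpleGraph V} (hG : IsSplit G) :
    ∃ K S, IsSMaxKSPartition G K S := by
  obtain ⟨K, S, h⟩ := hG
  by_cases hS : S.card = alphaNum G
  · exact ⟨K, S, h, hS⟩
  obtain ⟨k, hkK, hk⟩ : ∃ k ∈ K, ∀ s ∈ S, ¬ G.Adj s k := by
    simpa [h.card_eq_alphaNum_iff] using hS
  have hkS : k ∉ S := fun hkS => h.mem_iff_notMem.1 hkS hkK
  refine ⟨K.erase k, insert k S, h.erase_insert hk, ?_⟩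
  have := card_le_alphaNum h.2.2.2
  have := h.alphaNum_le_card_add_one
  rw [Finset.card_insert_of_notMem hkS]
  omega

section Transport

variable {W : Type*} [Fintype W] [DecidableEq W] {G : SimpleGraph V} {H : SimpleGraph W}
  {K S : Finset V}

theorem IsKSPartition.map (f : G ≃g H) (h : IsKSPartition G K S) :
    IsKSPartition H (K.map f.toEquiv.toEmbedding) (S.map f.toEquiv.toEmbedding) := by
  refine ⟨(Finset.disjoint_map _).2 h.1, by rw [← Finset.map_union, h.2.1, Finset.map_univ_equiv],
    fun x hx y hy hxy => ?_, fun x hx y hy hxy => ?_⟩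
  · simp only [Finset.coe_map, Equiv.coe_toEmbedding, Set.mem_image, Finset.mem_coe] at hx hy
    obtain ⟨x, hx, rfl⟩ := hx
    obtain ⟨y, hy, rfl⟩ := hy
    exact f.map_adj_iff.2 (h.2.2.1 hx hy (ne_of_apply_ne _ hxy))
  · simp only [Finset.coe_map, Equiv.coe_toEmbedding, Set.mem_image, Finset.mem_coe] at hx hy
    obtain ⟨x, hx, rfl⟩ := hx
    obtain ⟨y, hy, rfl⟩ := hy
    exact mt f.map_adj_iff.1 (h.2.2.2 hx hy (ne_of_apply_ne _ hxy))

theorem IsSMaxKSPartition.map (f : G ≃g H) (h : IsSMaxKSPartition G K S) :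
    IsSMaxKSPartition H (K.map f.toEquiv.toEmbedding) (S.map f.toEquiv.toEmbedding) := by
  refine ⟨h.1.map f, (h.1.map f).card_eq_alphaNum_iff.2 fun k hk => ?_⟩
  rw [Finset.mem_map_equiv] at hk
  obtain ⟨s, hs, hsk⟩ := h.1.card_eq_alphaNum_iff.1 h.2 _ hk
  exact ⟨f s, Finset.mem_map_of_mem _ hs, f.apply_symm_apply k ▸ f.map_adj_iff.2 hsk⟩

end Transport

def SimpleGraph.swapIso (G : SimpleGraph V) {x y : V}
    (hxy : ∀ v, v ≠ x → v ≠ y → (G.Adj v x ↔ G.Adj v y)) : G ≃g G where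
  toEquiv := Equiv.swap x y
  map_rel_iff' {a b} := by
    rw [Equiv.swap_apply_def, Equiv.swap_apply_def]
    grind [SimpleGraph.adj_comm, SimpleGraph.irrefl]

theorem IsSMaxKSPartition.exists_iso_map_eq {G : SimpleGraph V} {K S K' S' : Finset V}
    (h : IsSMaxKSPartition G K S) (h' : IsSMaxKSPartition G K' S') :
    ∃ f : G ≃g G, K.map f.toEquiv.toEmbedding = K' := by
  by_cases hKK : K = K'
  · exact ⟨.refl, hKK ▸ Finset.map_refl⟩
  have hcard : K.card = K'.card := by
    have := h.1.card_add_card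
    have := h'.1.card_add_card
    have := h.2.trans h'.2.symm
    omega
  obtain ⟨y, hy⟩ : (K \ K').Nonempty := Finset.sdiff_nonempty.2 fun hsub =>
    hKK (Finset.eq_of_subset_of_card_le hsub hcard.ge)
  obtain ⟨x, hx⟩ : (K' \ K).Nonempty := Finset.sdiff_nonempty.2 fun hsub =>
    hKK (Finset.eq_of_subset_of_card_le hsub hcard.le).symm
  refine ⟨G.swapIso fun v hvx hvy => h.1.adj_iff_adj_of_mem_sdiff h'.1 hx hy hvx hvy,
    Finset.ext fun v => ?_⟩
  have hmem : v ≠ x → v ≠ y → (v ∈ K ↔ v ∈ K') := h.1.mem_iff_mem_of_mem_sdiff h'.1 hx hy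
  rw [Finset.mem_sdiff] at hx hy
  rw [Finset.mem_map_equiv]
  change Equiv.swap x y v ∈ K ↔ v ∈ K'
  rw [Equiv.swap_apply_def]
  grind

theorem BipPosetRel.trans {n : ℕ} {P Q R : BipPoset n} (hPQ : BipPosetRel n P Q)
    (hQR : BipPosetRel n Q R) : BipPosetRel n P R :=
  let ⟨e, he⟩ := hPQ
  let ⟨e', he'⟩ := hQR
  ⟨e.trans e', fun a b => (he a b).trans (he' (e a) (e b))⟩

namespace SimpleGraph

variable {n : ℕ}

/-- The stable side of a KS-partition is the complement of the clique `K`, so `K` alone determines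
the poset `x ≺ y ↔ x ∈ S ∧ y ∈ K ∧ xy ∈ E`. -/
def toBipPoset (G : SimpleGraph (Fin n)) (K : Finset (Fin n)) : BipPoset n where
  lt a b := a ∉ K ∧ b ∈ K ∧ G.Adj a b
  irrefl _ h := h.1 h.2.1
  trans _ _ _ hab hbc := absurd hab.2.1 hbc.1
  height_le_one _ _ _ h := h.2.1 h.1.2.1

@[simp] theorem toBipPoset_lt {G : SimpleGraph (Fin n)} {K : Finset (Fin n)} {a b : Fin n} :
    (G.toBipPoset K).lt a b ↔ a ∉ K ∧ b ∈ K ∧ G.Adj a b :=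
  Iff.rfl

theorem Iso.toBipPoset_rel {G H : SimpleGraph (Fin n)} (f : G ≃g H) (K : Finset (Fin n)) :
    BipPosetRel n (G.toBipPoset K) (H.toBipPoset (K.map f.toEquiv.toEmbedding)) :=
  ⟨f.toEquiv, fun _ _ => and_congr (not_congr (Finset.mem_map' _).symm)
    (and_congr (Finset.mem_map' _).symm f.map_adj_iff.symm)⟩

end SimpleGraph

attribute [ext] BipPoset

namespace BipPoset

variable {n : ℕ}

def toGraph (P : BipPoset n) : SimpleGraph (Fin n) where
  Adj x y := x ≠ y ∧ (HeightOne P x ∧ HeightOne P y ∨ P.lt x y ∨ P.lt y x)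
  symm := ⟨fun _ _ h => ⟨h.1.symm, by tauto⟩⟩
  loopless := ⟨fun _ h => h.1 rfl⟩

@[simp] theorem toGraph_adj {P : BipPoset n} {x y : Fin n} :
    P.toGraph.Adj x y ↔ x ≠ y ∧ (HeightOne P x ∧ HeightOne P y ∨ P.lt x y ∨ P.lt y x) :=
  Iff.rfl

noncomputable def heightOneSet (P : BipPoset n) : Finset (Fin n) := Finset.univ.filter (HeightOne P)

@[simp] theorem mem_heightOneSet {P : BipPoset n} {y : Fin n} :
    y ∈ P.heightOneSet ↔ HeightOne P y := by
  simp [heightOneSet]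

theorem not_heightOne_of_lt {P : BipPoset n} {a b : Fin n} (h : P.lt a b) : ¬ HeightOne P a :=
  fun ⟨u, hu⟩ => P.height_le_one u a b ⟨hu, h⟩

theorem isSMaxKSPartition_toGraph (P : BipPoset n) :
    IsSMaxKSPartition P.toGraph P.heightOneSet P.heightOneSetᶜ := by
  have hpart : IsKSPartition P.toGraph P.heightOneSet P.heightOneSetᶜ := by
    refine ⟨disjoint_compl_right, Finset.union_compl _, fun x hx y hy hxy => ?_,
      fun x hx y hy hxy hadj => ?_⟩
    · simp only [Finset.mem_coe, mem_heightOneSet] at hx hy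
      exact ⟨hxy, Or.inl ⟨hx, hy⟩⟩
    · simp only [Finset.coe_compl, Set.mem_compl_iff, Finset.mem_coe, mem_heightOneSet] at hx hy
      rcases (toGraph_adj.1 hadj).2 with ⟨hx', -⟩ | hlt | hlt
      exacts [hx hx', hy ⟨x, hlt⟩, hx ⟨y, hlt⟩]
  refine ⟨hpart, hpart.card_eq_alphaNum_iff.2 fun k hk => ?_⟩
  obtain ⟨u, hu⟩ := mem_heightOneSet.1 hk
  exact ⟨u, by simpa using not_heightOne_of_lt hu, fun h => P.irrefl k (h ▸ hu), Or.inr (Or.inl hu)⟩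

theorem toBipPoset_toGraph (P : BipPoset n) : P.toGraph.toBipPoset P.heightOneSet = P := by
  ext a b
  simp only [SimpleGraph.toBipPoset_lt, toGraph_adj, mem_heightOneSet]
  constructor
  · rintro ⟨ha, -, -, ⟨ha', -⟩ | hab | hba⟩
    exacts [absurd ha' ha, hab, absurd ⟨b, hba⟩ ha]
  · intro hab
    exact ⟨not_heightOne_of_lt hab, ⟨a, hab⟩, fun h => P.irrefl a (h ▸ hab), Or.inr (Or.inl hab)⟩

end BipPoset

theorem BipPosetRel.toGraph_iso {n : ℕ} {P Q : BipPoset n} :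
    BipPosetRel n P Q → Nonempty (P.toGraph ≃g Q.toGraph)
  | ⟨e, he⟩ => by
    have hheight : ∀ a, HeightOne Q (e a) ↔ HeightOne P a := fun a =>
      e.surjective.exists.trans (exists_congr fun u => (he u a).symm)
    exact ⟨⟨e, by
      simp only [BipPoset.toGraph_adj, ← he, hheight, e.injective.ne_iff, implies_true]⟩⟩

namespace IsSMaxKSPartition

variable {n : ℕ} {G : SimpleGraph (Fin n)} {K S : Finset (Fin n)}

theorem heightOne_toBipPoset_iff (h : IsSMaxKSPartition G K S) {y : Fin n} :
    HeightOne (G.toBipPoset K) y ↔ y ∈ K := by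
  refine ⟨fun ⟨_, _, hy, _⟩ => hy, fun hy => ?_⟩
  obtain ⟨s, hs, hsy⟩ := h.1.card_eq_alphaNum_iff.1 h.2 y hy
  exact ⟨s, h.1.mem_iff_notMem.1 hs, hy, hsy⟩

theorem toGraph_toBipPoset (h : IsSMaxKSPartition G K S) : (G.toBipPoset K).toGraph = G := by
  ext a b
  simp only [BipPoset.toGraph_adj, h.heightOne_toBipPoset_iff, SimpleGraph.toBipPoset_lt]
  constructor
  · rintro ⟨hab, ⟨ha, hb⟩ | ⟨-, -, hadj⟩ | ⟨-, -, hadj⟩⟩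
    exacts [h.1.2.2.1 ha hb hab, hadj, hadj.symm]
  · intro hadj
    refine ⟨hadj.ne, ?_⟩
    by_cases ha : a ∈ K <;> by_cases hb : b ∈ K
    · exact Or.inl ⟨ha, hb⟩
    · exact Or.inr (Or.inr ⟨hb, ha, hadj.symm⟩)
    · exact Or.inr (Or.inl ⟨ha, hb, hadj⟩)
    · exact absurd hadj (h.1.2.2.2 (h.1.mem_iff_notMem.2 ha) (h.1.mem_iff_notMem.2 hb) hadj.ne)

theorem toBipPoset_rel {H : SimpleGraph (Fin n)} {K' S' : Finset (Fin n)} (f : G ≃g H)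
    (h : IsSMaxKSPartition G K S) (h' : IsSMaxKSPartition H K' S') :
    BipPosetRel n (G.toBipPoset K) (H.toBipPoset K') := by
  obtain ⟨g, rfl⟩ := (h.map f).exists_iso_map_eq h'
  exact (f.toBipPoset_rel K).trans (g.toBipPoset_rel _)

end IsSMaxKSPartition

theorem BipPoset.toBipPoset_toGraph_rel {n : ℕ} (P : BipPoset n) {K S : Finset (Fin n)}
    (h : IsSMaxKSPartition P.toGraph K S) : BipPosetRel n (P.toGraph.toBipPoset K) P := by
  have := h.toBipPoset_rel .refl P.isSMaxKSPartition_toGraph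
  rwa [P.toBipPoset_toGraph] at this

def Quot.equivOfInverse {α β : Sort*} {r : α → α → Prop} {s : β → β → Prop}
    (f : α → β) (g : β → α) (hf : ∀ ⦃a a'⦄, r a a' → s (f a) (f a'))
    (hg : ∀ ⦃b b'⦄, s b b' → r (g b) (g b')) (hgf : ∀ a, r (g (f a)) a)
    (hfg : ∀ b, s (f (g b)) b) : Quot r ≃ Quot s where
  toFun := Quot.map f hf
  invFun := Quot.map g hg
  left_inv := Quot.ind fun a => Quot.sound (hgf a)
  right_inv := Quot.ind fun b => Quot.sound (hfg b)

/-- There is a bijection between isomorphism classes of split graphs on `n` vertices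
and isomorphism classes of bipartite posets (posets of height at most one) on `n`
elements. -/
theorem split_poset_bijection (n : ℕ) :
    Nonempty (Quot (SplitIsoRel n) ≃ Quot (BipPosetRel n)) := by
  choose K S hK using fun G : {G : SimpleGraph (Fin n) // IsSplit G} =>
    G.2.exists_isSMaxKSPartition
  refine ⟨Quot.equivOfInverse (fun G => G.1.toBipPoset (K G))
    (fun P => ⟨P.toGraph, _, _, P.isSMaxKSPartition_toGraph.1⟩)
    (fun G H ⟨f⟩ => (hK G).toBipPoset_rel f (hK H)) (fun _ _ h => h.toGraph_iso)
    (fun G => ⟨by dsimp only; rw [(hK G).toGraph_toBipPoset]⟩)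
    (fun P => P.toBipPoset_toGraph_rel (hK _))⟩
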